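/- arXiv:2204.09960 — 4 statements merged into one kernel-verified Lean document; each statement's English description precedes it below -/
import Mathlib

section
/- For every PPLTL formula φ: (i) every occurrence in pnf(φ) of a subformula of the form ϕ₁ S ϕ₂ lies within the scope of a Y operator (i.e., pnf(φ) has proper temporal subformulas appearing only in the scope of Y); and (ii) every subformula of pnf(φ) of the form Y ϕ satisfies ϕ ∈ sub(φ). -/
inductive PPLTL (P : Type) : Type
  | atom : P → PPLTL P
  | neg : PPLTL P → PPLTL P
  | conj : PPLTL P → PPLTL P → PPLTL P
  | yesterday : PPLTL P → PPLTL P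
  | since : PPLTL P → PPLTL P → PPLTL P
  deriving DecidableEq

namespace PPLTL

variable {P : Type}

/-- Satisfaction of a pure-past LTL formula on the trace `τ` at instant `i`. -/
def Sat (τ : ℕ → Set P) : PPLTL P → ℕ → Prop
  | atom p, i => p ∈ τ i
  | neg φ, i => ¬ Sat τ φ i
  | conj φ ψ, i => Sat τ φ i ∧ Sat τ ψ i
  | yesterday φ, i => 1 ≤ i ∧ Sat τ φ (i - 1)
  | since φ ψ, i => ∃ k, k ≤ i ∧ Sat τ ψ k ∧ ∀ j, k < j → j ≤ i → Sat τ φ j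

/-- Disjunction abbreviation. -/
def por (φ ψ : PPLTL P) : PPLTL P := neg (conj (neg φ) (neg ψ))

/-- Previous normal form transformation. -/
def pnf : PPLTL P → PPLTL P
  | atom p => atom p
  | neg φ => neg (pnf φ)
  | conj φ ψ => conj (pnf φ) (pnf ψ)
  | yesterday φ => yesterday φ
  | since φ ψ => por (pnf ψ) (conj (pnf φ) (yesterday (since φ ψ)))

/-- The set of subformulas of a formula. -/
def sub [DecidableEq P] : PPLTL P → Finset (PPLTL P)
  | atom p => {atom p}
  | neg φ => insert (neg φ) (sub φ)
  | conj φ ψ => insert (conj φ ψ) (sub φ ∪ sub ψ)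
  | yesterday φ => insert (yesterday φ) (sub φ)
  | since φ ψ => insert (since φ ψ) (sub φ ∪ sub ψ)


/-- A formula has all its `since`-subformulas (proper temporal subformulas)
occurring only within the scope of a `yesterday` operator. -/
def sinceGuarded : PPLTL P → Prop
  | atom _ => True
  | neg φ => sinceGuarded φ
  | conj φ ψ => sinceGuarded φ ∧ sinceGuarded ψ
  | yesterday _ => True
  | since _ _ => False

lemma sinceGuarded_pnf (φ : PPLTL P) : sinceGuarded (pnf φ) := by
  induction φ with
  | atom | yesterday => trivial
  | neg φ ih => exact ih
  | conj φ₁ φ₂ ih₁ ih₂ => exact ⟨ih₁, ih₂⟩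
  | since φ₁ φ₂ ih₁ ih₂ => exact ⟨ih₂, ih₁, trivial⟩

section Subformulas

variable [DecidableEq P]

lemma mem_sub_self (φ : PPLTL P) : φ ∈ sub φ := by
  cases φ <;> simp [sub]

lemma sub_subset_sub_of_mem {ψ χ : PPLTL P} (h : ψ ∈ sub χ) : sub ψ ⊆ sub χ := by
  induction χ with
  | atom p =>
    rw [sub, Finset.mem_singleton] at h
    rw [h]
  | neg φ ih | yesterday φ ih =>
    rcases Finset.mem_insert.1 h with rfl | h
    · rfl
    · exact (ih h).trans (Finset.subset_insert _ _)
  | conj φ₁ φ₂ ih₁ ih₂ | since φ₁ φ₂ ih₁ ih₂ =>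
    rcases Finset.mem_insert.1 h with rfl | h
    · rfl
    rcases Finset.mem_union.1 h with h | h
    · exact (ih₁ h).trans (Finset.subset_union_left.trans (Finset.subset_insert _ _))
    · exact (ih₂ h).trans (Finset.subset_union_right.trans (Finset.subset_insert _ _))

lemma mem_sub_of_yesterday_mem_sub {ϕ χ : PPLTL P} (h : yesterday ϕ ∈ sub χ) : ϕ ∈ sub χ :=
  sub_subset_sub_of_mem h (Finset.mem_insert_of_mem (mem_sub_self ϕ))

lemma mem_sub_of_yesterday_mem_sub_pnf {ϕ : PPLTL P} :
    ∀ {φ : PPLTL P}, yesterday ϕ ∈ (pnf φ).sub → ϕ ∈ φ.sub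
  | atom p, h => by simp [pnf, sub] at h
  | neg φ, h => by
    simp only [pnf, sub, Finset.mem_insert, reduceCtorEq, false_or] at h
    exact Finset.mem_insert_of_mem (mem_sub_of_yesterday_mem_sub_pnf h)
  | conj φ₁ φ₂, h => by
    simp only [pnf, sub, Finset.mem_insert, Finset.mem_union, reduceCtorEq, false_or] at h ⊢
    exact Or.inr (h.imp mem_sub_of_yesterday_mem_sub_pnf mem_sub_of_yesterday_mem_sub_pnf)
  | yesterday φ, h => mem_sub_of_yesterday_mem_sub h
  | since φ₁ φ₂, h => by
    simp only [pnf, por, sub, Finset.mem_insert, Finset.mem_union, yesterday.injEq, reduceCtorEq,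
      false_or] at h ⊢
    rcases h with h | h | rfl | h | h
    · exact Or.inr (Or.inr (mem_sub_of_yesterday_mem_sub_pnf h))
    · exact Or.inr (Or.inl (mem_sub_of_yesterday_mem_sub_pnf h))
    · exact Or.inl rfl
    · exact Or.inr (Or.inl (mem_sub_of_yesterday_mem_sub h))
    · exact Or.inr (Or.inr (mem_sub_of_yesterday_mem_sub h))

end Subformulas

/-- (i) in `pnf φ` every occurrence of a formula of the form
`ϕ₁ S ϕ₂` lies within the scope of a `Y` operator, and (ii) every subformula of
`pnf φ` of the form `Y ϕ` satisfies `ϕ ∈ sub φ`. -/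
theorem pnf_shape [DecidableEq P] (φ : PPLTL P) :
    sinceGuarded (pnf φ) ∧ ∀ ϕ : PPLTL P, yesterday ϕ ∈ (pnf φ).sub → ϕ ∈ φ.sub :=
  ⟨sinceGuarded_pnf φ, fun _ => mem_sub_of_yesterday_mem_sub_pnf⟩

end PPLTL
end

section
/- Let φ be a PPLTL formula over P and let τ = s₀ be a trace of length 1. Then s₀ ⊨ φ if and only if val(φ, σ₋₁, s₀), where σ₋₁ is the interpretation assigning ⊥ to every proposition in Σφ. -/
namespace PPLTL

variable {P : Type}

/-- The predicate `val(ϕ, σ, s)`: truth of ϕ given the propositional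
interpretation `σ` over the quoted subformulas Σφ (here modelled as a
predicate on formulas) and the current propositional interpretation `s`. -/
def val (σ : PPLTL P → Prop) (s : Set P) : PPLTL P → Prop
  | atom p => p ∈ s
  | neg φ => ¬ val σ s φ
  | conj φ ψ => val σ s φ ∧ val σ s ψ
  | yesterday φ => σ φ
  | since φ ψ => val σ s ψ ∨ (val σ s φ ∧ σ (since φ ψ))

/-- The interpretation `σ₋₁` assigning ⊥ to every quoted proposition. -/
def sigmaInit : PPLTL P → Prop := fun _ => False

/-- `sigmaSeq τ 0 = σ₋₁` and `sigmaSeq τ (i+1) = σᵢ`, where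
`σᵢ(«ϕ») = val(ϕ, σ_{i-1}, sᵢ)`; i.e. `sigmaSeq τ i = σ_{i-1}`. -/
def sigmaSeq (τ : ℕ → Set P) : ℕ → PPLTL P → Prop
  | 0 => sigmaInit
  | i + 1 => fun ϕ => val (sigmaSeq τ i) (τ i) ϕ

section InitialInstant

variable {τ : ℕ → Set P}

theorem not_sat_yesterday_zero (φ : PPLTL P) : ¬ Sat τ (yesterday φ) 0 := by
  simp [Sat]

theorem sat_since_zero_iff (φ ψ : PPLTL P) : Sat τ (since φ ψ) 0 ↔ Sat τ ψ 0 := by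
  simp only [Sat, Nat.le_zero, exists_eq_left]
  exact and_iff_left fun j hj hj0 => absurd hj0 hj.ne'

theorem sat_zero_iff_val (φ : PPLTL P) : Sat τ φ 0 ↔ val sigmaInit (τ 0) φ := by
  induction φ with
  | atom p => rfl
  | neg φ ih => exact not_congr ih
  | conj φ ψ ihφ ihψ => exact and_congr ihφ ihψ
  | yesterday φ => exact iff_of_false (not_sat_yesterday_zero φ) id
  | since φ ψ _ ihψ =>
    exact (sat_since_zero_iff φ ψ).trans <| ihψ.trans (or_iff_left fun h => h.2).symm

end InitialInstant

/-- For a trace `τ = s₀` of length 1,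
`s₀ ⊨ φ` iff `val(φ, σ₋₁, s₀)`. -/
theorem sat_singleton_iff_val (φ : PPLTL P) (s₀ : Set P) :
    Sat (fun _ => s₀) φ 0 ↔ val sigmaInit s₀ φ :=
  sat_zero_iff_val φ

end PPLTL
end

section
/- Let D be a deterministic planning domain over fluents F, Γ = (D, s₀, φ) a planning problem with PPLTL goal φ, and Γ' = (D', s₀', G') the compiled planning problem. Then any sequence of actions a₁,…,aₘ executable from s₀ in D, inducing the unique trace s₀ s₁ ⋯ sₘ, is also executable from s₀' = (s₀, σ₋₁) in D', and it is a solution to Γ (i.e., the induced trace s₀⋯sₘ satisfies φ) if and only if the compiled state reached after executing it from s₀' in D' satisfies the reachability goal G'. -/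
/-- A (possibly nondeterministic) planning domain with states `S` and
actions `A`: `applicable s a` says action `a` is applicable in state `s`,
and `tr s a` is the set of successor states. -/
structure Domain (S A : Type) where
  applicable : S → A → Prop
  tr : S → A → Set S

/-- The compiled domain `D'`: states are pairs of a fluent state and an
interpretation of the quoted subformulas; actions and applicability are
unchanged; the Σφ-component is deterministically updated by
`σ'(«ϕ») = val(ϕ, σ, s)`, identically for every action. -/
def Domain.compiled {F A : Type} (D : Domain (Set F) A) :
    Domain (Set F × (PPLTL F → Prop)) A where
  applicable := fun p a => D.applicable p.1 a
  tr := fun p a => {q | q.1 ∈ D.tr p.1 a ∧ q.2 = fun ϕ => PPLTL.val p.2 p.1 ϕ}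

/-!
The quoted propositions carry exactly the past: by induction on the formula, `sigmaSeq τ i`
assigns to `«ϕ»` the truth of `ϕ` at instant `i - 1` (false before the start of the trace),
so `val` at instant `i` agrees with satisfaction. The `Y` case is immediate; the `S` case is an
induction on the instant using the unfolding `ϕ S ψ ≡ ψ ∨ (ϕ ∧ Y (ϕ S ψ))`, which is literally
the clause of `val` for `S`. Executability in the compiled domain is immediate, because the
`Σφ`-component of the successor is computed from the current compiled state alone.
-/

namespace PPLTL

variable {P : Type} (τ : ℕ → Set P) (φ ψ : PPLTL P)

theorem sat_yesterday_zero : ¬ Sat τ (yesterday φ) 0 := fun h => absurd h.1 (by decide)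

theorem sat_yesterday_succ (i : ℕ) : Sat τ (yesterday φ) (i + 1) ↔ Sat τ φ i := by
  simp [Sat]

theorem sat_since_zero : Sat τ (since φ ψ) 0 ↔ Sat τ ψ 0 := by
  simp only [Sat, Nat.le_zero]
  constructor
  · rintro ⟨k, rfl, hψ, -⟩
    exact hψ
  · intro hψ
    exact ⟨0, rfl, hψ, fun j hj hj0 => absurd hj0 hj.ne'⟩

theorem sat_since_succ (i : ℕ) :
    Sat τ (since φ ψ) (i + 1) ↔ Sat τ ψ (i + 1) ∨ (Sat τ φ (i + 1) ∧ Sat τ (since φ ψ) i) := by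
  simp only [Sat]
  constructor
  · rintro ⟨k, hk, hψ, hφ⟩
    rcases hk.lt_or_eq with hk | rfl
    · exact Or.inr ⟨hφ (i + 1) hk le_rfl,
        k, Nat.lt_succ_iff.mp hk, hψ, fun j hkj hji => hφ j hkj (hji.trans i.le_succ)⟩
    · exact Or.inl hψ
  · rintro (hψ | ⟨hφ, k, hk, hψ, hφ'⟩)
    · exact ⟨i + 1, le_rfl, hψ, fun j hj hji => absurd (hj.trans_le hji) (lt_irrefl _)⟩
    · refine ⟨k, hk.trans i.le_succ, hψ, fun j hkj hji => ?_⟩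
      rcases hji.lt_or_eq with hji | rfl
      · exact hφ' j hkj (Nat.lt_succ_iff.mp hji)
      · exact hφ

theorem sat_iff_val_sigmaSeq (i : ℕ) : Sat τ φ i ↔ val (sigmaSeq τ i) (τ i) φ := by
  induction φ generalizing i with
  | atom p => rfl
  | neg φ ih => exact not_congr (ih i)
  | conj φ ψ ihφ ihψ => exact and_congr (ihφ i) (ihψ i)
  | yesterday φ ih =>
    cases i with
    | zero => exact iff_of_false (sat_yesterday_zero τ φ) id
    | succ i => exact (sat_yesterday_succ τ φ i).trans (ih i)
  | since φ ψ ihφ ihψ =>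
    induction i with
    | zero => exact (sat_since_zero τ φ ψ).trans ((ihψ 0).trans (or_iff_left (fun h => h.2)).symm)
    | succ i ihi =>
      rw [sat_since_succ, ihψ, ihφ, ihi]
      rfl

end PPLTL

open PPLTL in
theorem compiled_executable_and_goal_general {F A : Type} (D : Domain (Set F) A)
    (φ : PPLTL F) (s : ℕ → Set F) (acts : ℕ → A) (m : ℕ)
    (hexec : ∀ i < m, D.applicable (s i) (acts i) ∧ s (i + 1) ∈ D.tr (s i) (acts i)) :
    (∀ i < m,
      D.compiled.applicable (s i, sigmaSeq s i) (acts i) ∧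
        (s (i + 1), sigmaSeq s (i + 1)) ∈ D.compiled.tr (s i, sigmaSeq s i) (acts i)) ∧
    (Sat s φ m ↔ val (sigmaSeq s m) (s m) φ) := by
  exact ⟨fun i hi => ⟨(hexec i hi).1, (hexec i hi).2, rfl⟩, sat_iff_val_sigmaSeq s φ m⟩

open PPLTL in
/-- For a deterministic domain `D`, any action sequence
`a₀,…,a_{m-1}` executable from `s₀` in `D`, inducing the unique trace
`s₀ s₁ ⋯ sₘ`, is also executable from `s₀' = (s₀, σ₋₁)` in the compiled
domain `D'` (with compiled states `(sᵢ, σ_{i-1})`), and it is a solution to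
`Γ = (D, s₀, φ)` (the induced trace satisfies φ) iff the compiled state
reached satisfies the reachability goal `G'`, i.e. iff `val(φ, σ_{m-1}, sₘ)`. -/
theorem compiled_executable_and_goal {F A : Type} (D : Domain (Set F) A)
    (hne : ∀ s a, D.applicable s a → (D.tr s a).Nonempty)
    (hdet : ∀ s a, D.applicable s a → ∀ s₁ s₂, s₁ ∈ D.tr s a → s₂ ∈ D.tr s a → s₁ = s₂)
    (φ : PPLTL F) (s : ℕ → Set F) (acts : ℕ → A) (m : ℕ)
    (hexec : ∀ i < m, D.applicable (s i) (acts i) ∧ s (i + 1) ∈ D.tr (s i) (acts i)) :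
    (∀ i < m,
      D.compiled.applicable (s i, sigmaSeq s i) (acts i) ∧
        (s (i + 1), sigmaSeq s (i + 1)) ∈ D.compiled.tr (s i, sigmaSeq s i) (acts i)) ∧
    (Sat s φ m ↔ val (sigmaSeq s m) (s m) φ) :=
  compiled_executable_and_goal_general D φ s acts m hexec
end

section
/- In the compiled domain D', the bookkeeping component is action-independent: for every sequence of compiled states (s₀, σ'₀), (s₁, σ'₁), …, (sₙ, σ'ₙ) obtained by executing any applicable action sequence from (s₀, σ₋₁) (so σ'₀ = σ₋₁), one has σ'ᵢ = σ_{i−1} for every 1 ≤ i ≤ n, where the interpretations σᵢ over Σφ are defined by σᵢ(«ϕ») = val(ϕ, σ_{i−1}, sᵢ); in particular the Σφ-component after i steps is uniquely determined by the fluent states s₀, …, s_{i−1} and does not depend on which actions were executed. -/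
theorem PPLTL.eq_sigmaSeq_of_succ_eq_val {P : Type} {τ : ℕ → Set P} {σ : ℕ → PPLTL P → Prop}
    {n : ℕ} (h0 : σ 0 = PPLTL.sigmaInit) (hsucc : ∀ i < n, σ (i + 1) = PPLTL.val (σ i) (τ i)) :
    ∀ i ≤ n, σ i = PPLTL.sigmaSeq τ i := by
  intro i hi
  induction i with
  | zero => exact h0
  | succ i ih =>
    rw [hsucc i hi, ih (Nat.le_of_succ_le hi)]
    rfl

theorem Domain.snd_eq_val_of_mem_compiled_tr {F A : Type} {D : Domain (Set F) A}
    {p q : Set F × (PPLTL F → Prop)} {a : A} (h : q ∈ D.compiled.tr p a) :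
    q.2 = PPLTL.val p.2 p.1 :=
  h.2

open PPLTL in
/-- In the compiled domain `D'` the bookkeeping component is
action-independent: along any execution
`(s₀, σ'₀), …, (sₙ, σ'ₙ)` of any applicable action sequence from
`(s₀, σ₋₁)` (so `σ'₀ = σ₋₁`), one has `σ'ᵢ = σ_{i-1}` for every `1 ≤ i ≤ n`,
where `σᵢ(«ϕ») = val(ϕ, σ_{i-1}, sᵢ)` (i.e. `σ_{i-1} = sigmaSeq s i`); in
particular the Σφ-component after `i` steps depends only on `s₀, …, s_{i-1}`
and not on the executed actions. -/
theorem compiled_bookkeeping_action_independent {F A : Type} (D : Domain (Set F) A)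
    (s : ℕ → Set F) (σ' : ℕ → PPLTL F → Prop) (acts : ℕ → A) (n : ℕ)
    (h0 : σ' 0 = sigmaInit)
    (hstep : ∀ i < n,
      D.compiled.applicable (s i, σ' i) (acts i) ∧
        (s (i + 1), σ' (i + 1)) ∈ D.compiled.tr (s i, σ' i) (acts i)) :
    ∀ i, 1 ≤ i → i ≤ n → σ' i = sigmaSeq s i := fun i _ hi =>
  eq_sigmaSeq_of_succ_eq_val h0
    (fun i hi => Domain.snd_eq_val_of_mem_compiled_tr (hstep i hi).2) i hi
end
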